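/- arXiv:2312.01036 — 2 statements merged into one kernel-verified Lean document; each statement's English description precedes it below -/
import Mathlib

section
/- (Lemma 'Part 2' of the main theorem.) Let N ≥ 1, let G be a simple graph on Fin N, let g ≥ 0 be real, and let H = -∑_{{i,j} ∈ E_G} Z_iZ_j - g ∑_i X_i. Let ψ be a unit vector (⟨ψ, ψ⟩ = 1) such that for every i ∈ Fin N, either X_i ψ = ψ or Re⟨ψ, X_i ψ⟩ ≤ 0 (this hypothesis holds in particular for every stabilizer state). Let K = {i ∈ Fin N : X_i ψ = ψ} and V = (Fin N) \ K. Then Re⟨ψ, H ψ⟩ ≥ -|E(V)| - g·|K|, where E(V) is the set of edges of G with both endpoints in V. -/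
/-!
Expand `⟨ψ, H ψ⟩` term by term. A `Z_iZ_j` expectation is always at most `‖ψ‖² = 1`, and it
vanishes as soon as `X_i ψ = ψ`: the substitution `x ↦ x` with bit `i` flipped leaves `ψ`
unchanged but reverses the sign of `Z_iZ_j`. Hence only edges inside `V` contribute, each by at
least `-1`. An `X_i` expectation is `1` for `i ∈ K` and `≤ 0` otherwise, which gives `-g·|K|`.
-/

open scoped BigOperators Classical

noncomputable section

/-- Inner product on the `N`-qubit state space of functions `(Fin N → Fin 2) → ℂ`:
`⟨ψ, φ⟩ = ∑ x, conj (ψ x) * φ x`. -/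
def qInner {N : ℕ} (ψ φ : (Fin N → Fin 2) → ℂ) : ℂ :=
  ∑ x : Fin N → Fin 2, (starRingEnd ℂ) (ψ x) * φ x

/-- The Pauli `X` operator on qubit `i`: `(X_i ψ)(x) = ψ(x with bit i flipped)`. -/
def pauliX {N : ℕ} (i : Fin N) (ψ : (Fin N → Fin 2) → ℂ) : (Fin N → Fin 2) → ℂ :=
  fun x => ψ (Function.update x i (1 - x i))

/-- The operator `Z_i Z_j`: `(Z_iZ_j ψ)(x) = (-1)^(x i + x j) · ψ(x)`. -/
def pauliZZ {N : ℕ} (i j : Fin N) (ψ : (Fin N → Fin 2) → ℂ) : (Fin N → Fin 2) → ℂ :=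
  fun x => (-1 : ℂ) ^ ((x i).val + (x j).val) * ψ x

/-- The edges of `G` with both endpoints in the vertex set `S` (edges of the induced subgraph). -/
def inducedEdges {α : Type*} [Fintype α] [DecidableEq α] (G : SimpleGraph α)
    [DecidableRel G.Adj] (S : Finset α) : Finset (Sym2 α) :=
  G.edgeFinset.filter (fun e => ∀ v ∈ e, v ∈ S)

/-- The `Z_iZ_j` term of an edge `e = s(i,j)`, applied to `ψ` and evaluated at `x`. -/
def edgeZZ {N : ℕ} (ψ : (Fin N → Fin 2) → ℂ) (x : Fin N → Fin 2) : Sym2 (Fin N) → ℂ :=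
  Sym2.lift ⟨fun i j => (-1 : ℂ) ^ ((x i).val + (x j).val) * ψ x,
    fun i j => by simp [Nat.add_comm]⟩

/-- The transverse-field Ising Hamiltonian `H = -∑_{{i,j} ∈ E_G} Z_iZ_j - g ∑_i X_i`. -/
def isingH {N : ℕ} (G : SimpleGraph (Fin N)) [DecidableRel G.Adj] (g : ℝ)
    (ψ : (Fin N → Fin 2) → ℂ) : (Fin N → Fin 2) → ℂ :=
  fun x => -(∑ e ∈ G.edgeFinset, edgeZZ ψ x e) - (g : ℂ) * ∑ i : Fin N, pauliX i ψ x

section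

variable {N : ℕ}

def flipBit (i : Fin N) (x : Fin N → Fin 2) : Fin N → Fin 2 :=
  Function.update x i (1 - x i)

lemma flipBit_involutive (i : Fin N) : Function.Involutive (flipBit i) := by
  intro x
  ext k
  rcases eq_or_ne k i with rfl | hk
  · simp only [flipBit, Function.update_self]
    omega
  · simp [flipBit, Function.update_of_ne hk]

lemma neg_one_pow_flipBit (i j : Fin N) (hij : i ≠ j) (x : Fin N → Fin 2) :
    (-1 : ℂ) ^ ((flipBit i x i).val + (flipBit i x j).val)
      = -(-1 : ℂ) ^ ((x i).val + (x j).val) := by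
  simp only [flipBit, Function.update_self, Function.update_of_ne hij.symm]
  rcases Fin.exists_fin_two.mp ⟨x i, rfl⟩ with h | h <;> simp [h, pow_add]

lemma qInner_self (ψ : (Fin N → Fin 2) → ℂ) :
    qInner ψ ψ = ((∑ x, Complex.normSq (ψ x) : ℝ) : ℂ) := by
  push_cast
  exact Finset.sum_congr rfl fun x _ => Complex.normSq_eq_conj_mul_self.symm

lemma qInner_isingH (G : SimpleGraph (Fin N)) [DecidableRel G.Adj] (g : ℝ)
    (ψ : (Fin N → Fin 2) → ℂ) :
    qInner ψ (isingH G g ψ) = -∑ e ∈ G.edgeFinset, qInner ψ (edgeZZ ψ · e)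
      - g * ∑ i, qInner ψ (pauliX i ψ) := by
  simp only [qInner, isingH, mul_sub, mul_neg, Finset.mul_sum, Finset.sum_sub_distrib,
    Finset.sum_neg_distrib]
  rw [Finset.sum_comm (s := Finset.univ), Finset.sum_comm (s := Finset.univ)]
  congr 2 with i
  exact Finset.sum_congr rfl fun x _ => by ring

lemma re_qInner_edgeZZ_le (ψ : (Fin N → Fin 2) → ℂ) (e : Sym2 (Fin N)) :
    (qInner ψ (edgeZZ ψ · e)).re ≤ (qInner ψ ψ).re := by
  induction e using Sym2.inductionOn with
  | hf i j =>
    have hterm (x : Fin N → Fin 2) : (starRingEnd ℂ) (ψ x) * edgeZZ ψ x s(i, j)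
        = (((-1 : ℝ) ^ ((x i).val + (x j).val) * Complex.normSq (ψ x) : ℝ) : ℂ) := by
      simp only [edgeZZ, Sym2.lift_mk]
      push_cast
      rw [Complex.normSq_eq_conj_mul_self]
      ring
    rw [qInner_self, Complex.ofReal_re, qInner, Complex.re_sum]
    refine Finset.sum_le_sum fun x _ => ?_
    rw [hterm, Complex.ofReal_re]
    exact mul_le_of_le_one_left (Complex.normSq_nonneg _)
      ((le_abs_self _).trans (abs_neg_one_pow _).le)

lemma qInner_edgeZZ_eq_zero {ψ : (Fin N → Fin 2) → ℂ} {i j : Fin N} (hij : i ≠ j)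
    (hψ : pauliX i ψ = ψ) : qInner ψ (edgeZZ ψ · s(i, j)) = 0 := by
  have hfix (x : Fin N → Fin 2) : ψ (flipBit i x) = ψ x := congrFun hψ x
  have hneg : qInner ψ (edgeZZ ψ · s(i, j)) = -qInner ψ (edgeZZ ψ · s(i, j)) := by
    conv_lhs => rw [qInner, ← Equiv.sum_comp (flipBit_involutive i).toPerm]
    rw [qInner, ← Finset.sum_neg_distrib]
    refine Finset.sum_congr rfl fun x _ => ?_
    simp only [Function.Involutive.coe_toPerm, edgeZZ, Sym2.lift_mk, hfix,
      neg_one_pow_flipBit i j hij x]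
    ring
  linear_combination hneg / 2

lemma qInner_edgeZZ_eq_zero_of_mem {ψ : (Fin N → Fin 2) → ℂ} {e : Sym2 (Fin N)}
    (he : ¬e.IsDiag) {i : Fin N} (hi : i ∈ e) (hψ : pauliX i ψ = ψ) :
    qInner ψ (edgeZZ ψ · e) = 0 := by
  rw [← Sym2.other_spec hi]
  exact qInner_edgeZZ_eq_zero (Sym2.other_ne he hi).symm hψ

lemma sum_re_qInner_edgeZZ_le (G : SimpleGraph (Fin N)) [DecidableRel G.Adj]
    {ψ : (Fin N → Fin 2) → ℂ} (S : Finset (Fin N)) (hS : ∀ i ∉ S, pauliX i ψ = ψ) :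
    ∑ e ∈ G.edgeFinset, (qInner ψ (edgeZZ ψ · e)).re
      ≤ (inducedEdges G S).card * (qInner ψ ψ).re := by
  rw [← Finset.sum_filter_add_sum_filter_not G.edgeFinset (fun e => ∀ v ∈ e, v ∈ S)]
  have houtside : ∑ e ∈ G.edgeFinset.filter (fun e => ¬∀ v ∈ e, v ∈ S),
      (qInner ψ (edgeZZ ψ · e)).re = 0 := by
    refine Finset.sum_eq_zero fun e he => ?_
    obtain ⟨heG, hout⟩ := Finset.mem_filter.mp he
    push Not at hout
    obtain ⟨v, hv, hvS⟩ := hout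
    rw [qInner_edgeZZ_eq_zero_of_mem (G.not_isDiag_of_mem_edgeSet
      (G.mem_edgeFinset.mp heG)) hv (hS v hvS), Complex.zero_re]
  rw [houtside, add_zero, ← nsmul_eq_mul]
  exact (Finset.sum_le_card_nsmul _ _ _ fun e _ => re_qInner_edgeZZ_le ψ e).trans_eq
    (by unfold inducedEdges; congr)

lemma sum_re_qInner_pauliX_le {ψ : (Fin N → Fin 2) → ℂ}
    (hstab : ∀ i : Fin N, pauliX i ψ = ψ ∨ (qInner ψ (pauliX i ψ)).re ≤ 0) :
    ∑ i, (qInner ψ (pauliX i ψ)).re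
      ≤ (Finset.univ.filter (fun i => pauliX i ψ = ψ)).card * (qInner ψ ψ).re := by
  rw [← Finset.sum_filter_add_sum_filter_not Finset.univ (fun i => pauliX i ψ = ψ)]
  have hstabilized : ∑ i ∈ Finset.univ.filter (fun i => pauliX i ψ = ψ),
      (qInner ψ (pauliX i ψ)).re
        = (Finset.univ.filter (fun i => pauliX i ψ = ψ)).card * (qInner ψ ψ).re := by
    rw [Finset.sum_congr rfl fun i hi => by rw [(Finset.mem_filter.mp hi).2],
      Finset.sum_const, nsmul_eq_mul]
  have hrest : ∑ i ∈ Finset.univ.filter (fun i => pauliX i ψ ≠ ψ),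
      (qInner ψ (pauliX i ψ)).re ≤ 0 :=
    Finset.sum_nonpos fun i hi => (hstab i).resolve_left (Finset.mem_filter.mp hi).2
  linarith

end

theorem stmt_6_general {N : ℕ} (G : SimpleGraph (Fin N)) [DecidableRel G.Adj]
    (g : ℝ) (hg : 0 ≤ g) (ψ : (Fin N → Fin 2) → ℂ) (hunit : qInner ψ ψ = 1)
    (hstab : ∀ i : Fin N, pauliX i ψ = ψ ∨ (qInner ψ (pauliX i ψ)).re ≤ 0) :
    -(((inducedEdges G
          (Finset.univ \ Finset.univ.filter (fun i : Fin N => pauliX i ψ = ψ))).card : ℝ))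
        - g * ((Finset.univ.filter (fun i : Fin N => pauliX i ψ = ψ)).card : ℝ)
      ≤ (qInner ψ (isingH G g ψ)).re := by
  have hnorm : (qInner ψ ψ).re = 1 := by rw [hunit, Complex.one_re]
  have hedges := sum_re_qInner_edgeZZ_le G
    (Finset.univ \ Finset.univ.filter (fun i : Fin N => pauliX i ψ = ψ))
    (fun i hi => by simpa using hi)
  have hfield := sum_re_qInner_pauliX_le hstab
  rw [hnorm, mul_one] at hedges hfield
  rw [qInner_isingH, Complex.sub_re, Complex.neg_re, Complex.re_ofReal_mul, Complex.re_sum,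
    Complex.re_sum]
  linarith [mul_le_mul_of_nonneg_left hfield hg]

/-- Lemma "Part 2": for a unit vector `ψ` such that each `X_i` either stabilizes `ψ` or has
nonpositive expectation, with `K = {i : X_i ψ = ψ}` and `V = (Fin N) \ K`, we have
`Re⟨ψ, H ψ⟩ ≥ -|E(V)| - g·|K|`. -/
theorem stmt_6 {N : ℕ} (hN : 1 ≤ N) (G : SimpleGraph (Fin N)) [DecidableRel G.Adj]
    (g : ℝ) (hg : 0 ≤ g) (ψ : (Fin N → Fin 2) → ℂ) (hunit : qInner ψ ψ = 1)
    (hstab : ∀ i : Fin N, pauliX i ψ = ψ ∨ (qInner ψ (pauliX i ψ)).re ≤ 0) :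
    -(((inducedEdges G
          (Finset.univ \ Finset.univ.filter (fun i : Fin N => pauliX i ψ = ψ))).card : ℝ))
        - g * ((Finset.univ.filter (fun i : Fin N => pauliX i ψ = ψ)).card : ℝ)
      ≤ (qInner ψ (isingH G g ψ)).re :=
  stmt_6_general G g hg ψ hunit hstab
end
end

section
/- (Corollary on two-segmented graphs, optimal value formula.) Let N ≥ 1, let G be a simple graph on Fin N with edge function ℰ, and let g ≥ 0 be real. Suppose G is two-segmented, i.e., ℰ(n)/n ≤ ℰ(N)/N for all integers n with 0 < n < N. Then: if g ≤ ℰ(N)/N, then min_{0 ≤ n ≤ N} (-ℰ(n) - g·(N - n)) = -ℰ(N); and if g ≥ ℰ(N)/N, then min_{0 ≤ n ≤ N} (-ℰ(n) - g·(N - n)) = -g·N. -/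
open scoped BigOperators Classical

noncomputable section

/-- The edge function `ℰ(n) = max_{S ⊆ Fin N, |S| ≤ n} |E(S)|`. -/
def edgeFun {N : ℕ} (G : SimpleGraph (Fin N)) [DecidableRel G.Adj] (n : ℕ) : ℕ :=
  (Finset.univ.filter (fun S : Finset (Fin N) => S.card ≤ n)).sup
    (fun S => (inducedEdges G S).card)

/-!
Two-segmentedness together with `ℰ(0) = 0` gives `ℰ(n) ≤ (n / N) ℰ(N)` for `n ≤ N`, so the
objective `-ℰ(n) - g (N - n)` lies above the chord joining its values `-g N` at `n = 0` and
`-ℰ(N)` at `n = N`. Its minimum is therefore the smaller of these two values.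
-/

def IsTwoSegmented (e : ℕ → ℝ) (N : ℕ) : Prop :=
  ∀ n : ℕ, 0 < n → n < N → e n / n ≤ e N / N

lemma edgeFun_zero {N : ℕ} (G : SimpleGraph (Fin N)) [DecidableRel G.Adj] :
    edgeFun G 0 = 0 := by
  refine (Finset.sup_eq_bot_iff _ _).mpr fun S hS => ?_
  obtain rfl : S = ∅ := by simpa using hS
  refine Finset.card_eq_zero.mpr (Finset.eq_empty_of_forall_notMem fun e he => ?_)
  simp only [inducedEdges, Finset.mem_filter] at he
  obtain ⟨-, hmem⟩ := he
  induction e with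
  | h a b => exact Finset.notMem_empty a (hmem a (Sym2.mem_mk_left a b))

lemma IsTwoSegmented.mul_le {e : ℕ → ℝ} {N n : ℕ} (h : IsTwoSegmented e N) (he0 : e 0 = 0)
    (hn : n ≤ N) : e n * N ≤ n * e N := by
  rcases Nat.eq_zero_or_pos n with rfl | hpos
  · simp [he0]
  rcases hn.lt_or_eq with hlt | rfl
  · have hN : (0 : ℝ) < N := by exact_mod_cast hpos.trans hlt
    have := h n hpos hlt
    rwa [div_le_div_iff₀ (by exact_mod_cast hpos) hN, mul_comm (e N)] at this
  · exact (mul_comm _ _).le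

lemma min_le_neg_sub_mul {e : ℕ → ℝ} {N n : ℕ} (hN : 0 < N) (hn : n ≤ N)
    (he : e n * N ≤ n * e N) (g : ℝ) :
    min (-(g * N)) (-e N) ≤ -e n - g * (N - n) := by
  have hN' : (0 : ℝ) < N := by exact_mod_cast hN
  have hn' : (n : ℝ) ≤ N := by exact_mod_cast hn
  refine le_of_mul_le_mul_left ?_ hN'
  calc (N : ℝ) * min (-(g * N)) (-e N)
      = (N - n) * min (-(g * N)) (-e N) + n * min (-(g * N)) (-e N) := by ring
    _ ≤ (N - n) * -(g * N) + n * -e N := by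
        gcongr
        · exact min_le_left _ _
        · exact min_le_right _ _
    _ ≤ N * (-e n - g * (N - n)) := by nlinarith

lemma Finset.inf'_range_succ_eq_min {α : Type*} [LinearOrder α] {N : ℕ} (F : ℕ → α)
    (H : (Finset.range (N + 1)).Nonempty) (h : ∀ n ≤ N, min (F 0) (F N) ≤ F n) :
    (Finset.range (N + 1)).inf' H F = min (F 0) (F N) :=
  le_antisymm
    (le_min (Finset.inf'_le F (by simp)) (Finset.inf'_le F (by simp)))
    (Finset.le_inf' H F fun n hn => h n (Nat.lt_succ_iff.mp (Finset.mem_range.mp hn)))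

theorem stmt_18_general {N : ℕ} (hN : 1 ≤ N) (G : SimpleGraph (Fin N)) [DecidableRel G.Adj]
    (g : ℝ)
    (hts : ∀ n : ℕ, 0 < n → n < N →
      (edgeFun G n : ℝ) / (n : ℝ) ≤ (edgeFun G N : ℝ) / (N : ℝ)) :
    (g ≤ (edgeFun G N : ℝ) / (N : ℝ) →
      Finset.inf' (Finset.range (N + 1)) ⟨0, Finset.mem_range.mpr (Nat.succ_pos N)⟩
          (fun n => -((edgeFun G n : ℝ)) - g * ((N : ℝ) - (n : ℝ))) =
        -((edgeFun G N : ℝ))) ∧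
    ((edgeFun G N : ℝ) / (N : ℝ) ≤ g →
      Finset.inf' (Finset.range (N + 1)) ⟨0, Finset.mem_range.mpr (Nat.succ_pos N)⟩
          (fun n => -((edgeFun G n : ℝ)) - g * ((N : ℝ) - (n : ℝ))) =
        -(g * (N : ℝ))) := by
  have hNpos : (0 : ℝ) < N := by exact_mod_cast hN
  have hmin : Finset.inf' (Finset.range (N + 1)) ⟨0, Finset.mem_range.mpr (Nat.succ_pos N)⟩
      (fun n => -((edgeFun G n : ℝ)) - g * ((N : ℝ) - (n : ℝ))) =
        min (-(g * N)) (-(edgeFun G N : ℝ)) := by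
    refine (Finset.inf'_range_succ_eq_min _ _ fun n hn => ?_).trans (by simp [edgeFun_zero])
    have he := IsTwoSegmented.mul_le (e := fun n => (edgeFun G n : ℝ)) hts
      (by simp [edgeFun_zero]) hn
    simpa [edgeFun_zero] using min_le_neg_sub_mul (e := fun n => (edgeFun G n : ℝ)) hN hn he g
  rw [hmin]
  exact ⟨fun h => min_eq_right (neg_le_neg ((le_div_iff₀ hNpos).mp h)),
    fun h => min_eq_left (neg_le_neg ((div_le_iff₀ hNpos).mp h))⟩

/-- Corollary on two-segmented graphs (optimal value formula): if `ℰ(n)/n ≤ ℰ(N)/N` for all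
`0 < n < N`, then the minimum of `-ℰ(n) - g·(N - n)` over `0 ≤ n ≤ N` is `-ℰ(N)` when
`g ≤ ℰ(N)/N` and `-g·N` when `g ≥ ℰ(N)/N`. -/
theorem stmt_18 {N : ℕ} (hN : 1 ≤ N) (G : SimpleGraph (Fin N)) [DecidableRel G.Adj]
    (g : ℝ) (hg : 0 ≤ g)
    (hts : ∀ n : ℕ, 0 < n → n < N →
      (edgeFun G n : ℝ) / (n : ℝ) ≤ (edgeFun G N : ℝ) / (N : ℝ)) :
    (g ≤ (edgeFun G N : ℝ) / (N : ℝ) →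
      Finset.inf' (Finset.range (N + 1)) ⟨0, Finset.mem_range.mpr (Nat.succ_pos N)⟩
          (fun n => -((edgeFun G n : ℝ)) - g * ((N : ℝ) - (n : ℝ))) =
        -((edgeFun G N : ℝ))) ∧
    ((edgeFun G N : ℝ) / (N : ℝ) ≤ g →
      Finset.inf' (Finset.range (N + 1)) ⟨0, Finset.mem_range.mpr (Nat.succ_pos N)⟩
          (fun n => -((edgeFun G n : ℝ)) - g * ((N : ℝ) - (n : ℝ))) =
        -(g * (N : ℝ))) :=
  stmt_18_general hN G g hts
end
end
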